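/- Let N ≥ 2 be an even natural number, let σ, β, ε, K > 0, and let φ : [0,1/2] → ℝ be differentiable and monotonically increasing with φ(0) = 0 and φ′(t) ≤ K N for all t ∈ [0,1/2]. Set ψ := e^{−φ} and M* := max_{t∈[0,1/2]} |ψ′(t)|. Define mesh points xᵢ := (σε/β) φ(i/N) for i = 0, …, N/2 and mesh widths hᵢ := xᵢ − xᵢ₋₁. Then (i) hᵢ ≤ (σ/β) ε K for all 1 ≤ i ≤ N/2, and (ii) for every 1 ≤ i ≤ N/2 and every x ∈ [xᵢ₋₁, xᵢ] one has hᵢ ≤ e^{K} (σ/β) ε N^{−1} M* e^{βx/(σε)}. -/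
import Mathlib


/-- Mesh-width bounds for an S-type mesh inside the layer region:
`hᵢ ≤ (σ/β) ε K` and `hᵢ ≤ e^K (σ/β) ε N⁻¹ max|ψ′| e^{βx/(σε)}` for
`x ∈ [xᵢ₋₁, xᵢ]`. -/
theorem stmt_3 (N : ℕ) (hN : 2 ≤ N) (hNeven : Even N)
    (σ β ε K : ℝ) (hσ : 0 < σ) (hβ : 0 < β) (hε : 0 < ε) (hK : 0 < K)
    (φ φ' : ℝ → ℝ)
    (hderiv : ∀ t ∈ Set.Icc (0:ℝ) (1/2),
      HasDerivWithinAt φ (φ' t) (Set.Icc (0:ℝ) (1/2)) t)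
    (hmono : MonotoneOn φ (Set.Icc (0:ℝ) (1/2)))
    (hφ0 : φ 0 = 0)
    (hbound : ∀ t ∈ Set.Icc (0:ℝ) (1/2), φ' t ≤ K * N)
    (Mstar : ℝ)
    (hM : IsGreatest
      ((fun t => |(-(φ' t)) * Real.exp (-φ t)|) '' Set.Icc (0:ℝ) (1/2)) Mstar) :
    (∀ i : ℕ, 1 ≤ i → i ≤ N / 2 →
      σ * ε / β * φ ((i : ℝ) / N) - σ * ε / β * φ (((i - 1 : ℕ) : ℝ) / N)
        ≤ σ / β * ε * K) ∧
    (∀ i : ℕ, 1 ≤ i → i ≤ N / 2 →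
      ∀ x ∈ Set.Icc (σ * ε / β * φ (((i - 1 : ℕ) : ℝ) / N)) (σ * ε / β * φ ((i : ℝ) / N)),
        σ * ε / β * φ ((i : ℝ) / N) - σ * ε / β * φ (((i - 1 : ℕ) : ℝ) / N)
          ≤ Real.exp K * (σ / β) * ε * (N : ℝ)⁻¹ * Mstar *
              Real.exp (β * x / (σ * ε))) := by
  have hN0 : (0:ℝ) < N := by
    have : (0:ℕ) < N := by omega
    exact_mod_cast this
  have hNne : (N:ℝ) ≠ 0 := hN0.ne'
  -- MVT-based key fact
  have key : ∀ i : ℕ, 1 ≤ i → i ≤ N / 2 →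
      ∃ c ∈ Set.Icc (0:ℝ) (1/2),
        φ ((i:ℝ)/N) - φ (((i-1:ℕ):ℝ)/N) = φ' c / N ∧
        φ c ≤ φ ((i:ℝ)/N) ∧ ((i:ℝ)/N) ∈ Set.Icc (0:ℝ) (1/2) := by
    intro i hi1 hi2
    have hcast : ((i-1:ℕ):ℝ) = (i:ℝ) - 1 := by
      have := Nat.cast_sub (R := ℝ) hi1
      simpa using this
    set a : ℝ := ((i-1:ℕ):ℝ)/N with ha_def
    set b : ℝ := (i:ℝ)/N with hb_def
    have hab : a < b := by
      rw [ha_def, hb_def, hcast, div_lt_div_iff₀ hN0 hN0]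
      nlinarith
    have ha0 : 0 ≤ a := by positivity
    have hb2 : b ≤ 1/2 := by
      have h2 : i * 2 ≤ N := (Nat.le_div_iff_mul_le (by norm_num)).mp hi2
      have h2' : (i:ℝ) * 2 ≤ N := by exact_mod_cast h2
      rw [hb_def, div_le_div_iff₀ hN0 (by norm_num : (0:ℝ) < 2)]
      linarith
    have hsub : Set.Icc a b ⊆ Set.Icc (0:ℝ) (1/2) := Set.Icc_subset_Icc ha0 hb2
    have hbI : b ∈ Set.Icc (0:ℝ) (1/2) := ⟨le_trans ha0 hab.le, hb2⟩
    have hcont : ContinuousOn φ (Set.Icc a b) :=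
      fun t ht => ((hderiv t (hsub ht)).continuousWithinAt).mono hsub
    have hd : ∀ t ∈ Set.Ioo a b, HasDerivAt φ (φ' t) t := by
      intro t ht
      have htmem : t ∈ Set.Ioo (0:ℝ) (1/2) :=
        ⟨lt_of_le_of_lt ha0 ht.1, lt_of_lt_of_le ht.2 hb2⟩
      exact (hderiv t (Set.Ioo_subset_Icc_self htmem)).hasDerivAt
        (Icc_mem_nhds htmem.1 htmem.2)
    obtain ⟨c, hc, hceq⟩ := exists_hasDerivAt_eq_slope φ φ' hab hcont hd
    have hcI : c ∈ Set.Icc (0:ℝ) (1/2) := hsub (Set.Ioo_subset_Icc_self hc)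
    refine ⟨c, hcI, ?_, hmono hcI hbI hc.2.le, hbI⟩
    have hba : b - a = 1/N := by rw [ha_def, hb_def, hcast]; ring
    rw [hba] at hceq
    field_simp at hceq ⊢
    linarith
  have keyM : ∀ c ∈ Set.Icc (0:ℝ) (1/2), φ' c ≤ Mstar * Real.exp (φ c) := by
    intro c hcI
    have habs : |(-(φ' c)) * Real.exp (-φ c)| ≤ Mstar := hM.2 ⟨c, hcI, rfl⟩
    rw [abs_mul, abs_neg, abs_of_pos (Real.exp_pos _)] at habs
    have h1 : φ' c ≤ |φ' c| := le_abs_self _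
    have h2 : |φ' c| ≤ Mstar * Real.exp (φ c) := by
      have := mul_le_mul_of_nonneg_right habs (Real.exp_pos (φ c)).le
      rwa [mul_assoc, ← Real.exp_add, neg_add_cancel, Real.exp_zero, mul_one] at this
    linarith
  have part1 : ∀ i : ℕ, 1 ≤ i → i ≤ N / 2 →
      σ * ε / β * φ ((i : ℝ) / N) - σ * ε / β * φ (((i - 1 : ℕ) : ℝ) / N)
        ≤ σ / β * ε * K := by
    intro i hi1 hi2
    obtain ⟨c, hcI, heq, -, -⟩ := key i hi1 hi2
    have hφ' := hbound c hcI
    have : σ * ε / β * φ ((i : ℝ) / N) - σ * ε / β * φ (((i - 1 : ℕ) : ℝ) / N)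
        = σ * ε / β * (φ' c / N) := by rw [← mul_sub, heq]
    rw [this]
    have hA : 0 < σ * ε / β := by positivity
    have : φ' c / N ≤ K := by
      rw [div_le_iff₀ hN0]; linarith
    calc σ * ε / β * (φ' c / N) ≤ σ * ε / β * K :=
          mul_le_mul_of_nonneg_left this hA.le
      _ = σ / β * ε * K := by ring
  refine ⟨part1, ?_⟩
  intro i hi1 hi2 x hx
  obtain ⟨c, hcI, heq, hcb, hbI⟩ := key i hi1 hi2
  have hMc := keyM c hcI
  have hMnn : 0 ≤ Mstar := le_trans (abs_nonneg _) (hM.2 ⟨c, hcI, rfl⟩)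
  -- φ (i/N) ≤ β x / (σ ε) + K
  have hdiff := part1 i hi1 hi2
  have hφb : φ ((i:ℝ)/N) ≤ β * x / (σ * ε) + K := by
    have hx2 : σ * ε / β * φ ((i:ℝ)/N) ≤ x + σ / β * ε * K := by
      have := hx.1
      linarith
    have hβσε : 0 < σ * ε / β := by positivity
    rw [← le_div_iff₀' hβσε] at hx2
    calc φ ((i:ℝ)/N) ≤ (x + σ / β * ε * K) / (σ * ε / β) := hx2
      _ = β * x / (σ * ε) + K := by field_simp
  have hec : Real.exp (φ c) ≤ Real.exp K * Real.exp (β * x / (σ * ε)) := by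
    rw [← Real.exp_add]
    apply Real.exp_le_exp.mpr
    linarith [hcb]
  have hφ'le : φ' c ≤ Mstar * (Real.exp K * Real.exp (β * x / (σ * ε))) := by
    calc φ' c ≤ Mstar * Real.exp (φ c) := hMc
      _ ≤ Mstar * (Real.exp K * Real.exp (β * x / (σ * ε))) :=
          mul_le_mul_of_nonneg_left hec hMnn
  have hA : 0 < σ * ε / β := by positivity
  have hkey : σ * ε / β * φ ((i : ℝ) / N) - σ * ε / β * φ (((i - 1 : ℕ) : ℝ) / N)
      = σ * ε / β * (φ' c / N) := by rw [← mul_sub, heq]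
  rw [hkey]
  have h1 : σ * ε / β * (φ' c / N)
      ≤ σ * ε / β * ((Mstar * (Real.exp K * Real.exp (β * x / (σ * ε)))) / N) := by
    gcongr
  calc σ * ε / β * (φ' c / N)
      ≤ σ * ε / β * ((Mstar * (Real.exp K * Real.exp (β * x / (σ * ε)))) / N) := h1
    _ = Real.exp K * (σ / β) * ε * (N : ℝ)⁻¹ * Mstar * Real.exp (β * x / (σ * ε)) := by
        field_simp
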